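/- arXiv:1404.0500 — 4 statements merged into one kernel-verified Lean document; each statement's English description precedes it below -/
import Mathlib

section
/- If K ⊆ X is q-compact and for some x, y ∈ X the ray R = {t•x + y : t ≥ 0} is contained in K, then the ray R' = {t•x : t ≥ 0} is contained in θ(0). -/
/-! Subadditivity of `q` makes `p ↦ q (p - y)` upper semicontinuous for `τ_q`, so it is bounded
above on the `q`-compact set `K`. Along the ray this function is `t ↦ t * q x`, forcing `q x = 0`. -/

open Set Pointwise

/-- Open ball of an asymmetric norm. -/
def asymBall {X : Type*} [AddCommGroup X] (q : X → ℝ) (x : X) (ε : ℝ) : Set X :=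
  {y | q (y - x) < ε}

/-- Closed ball of an asymmetric norm. -/
def asymClosedBall {X : Type*} [AddCommGroup X] (q : X → ℝ) (x : X) (ε : ℝ) : Set X :=
  {y | q (y - x) ≤ ε}

/-- The topology τ_q generated by the open balls of `q`. -/
def tauQ {X : Type*} [AddCommGroup X] (q : X → ℝ) : TopologicalSpace X :=
  TopologicalSpace.generateFrom {S | ∃ x ε, 0 < ε ∧ S = asymBall q x ε}

/-- The associated (symmetric) norm `q^s`. -/
def qs {X : Type*} [AddCommGroup X] (q : X → ℝ) : X → ℝ :=
  fun x => max (q x) (q (-x))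

/-- The topology τ_{q^s} induced by the norm `q^s` (generated by its balls). -/
def tauQs {X : Type*} [AddCommGroup X] (q : X → ℝ) : TopologicalSpace X :=
  TopologicalSpace.generateFrom {S | ∃ x ε, 0 < ε ∧ S = {y | qs q (y - x) < ε}}

/-- The set θ(0) = {x : q x = 0}. -/
def theta0 {X : Type*} [AddCommGroup X] (q : X → ℝ) : Set X :=
  {x | q x = 0}

/-- `x` is an extreme point of the convex set `A`. -/
def IsExtremePt {X : Type*} [AddCommGroup X] [Module ℝ X] (A : Set X) (x : X) : Prop :=
  x ∈ A ∧ ∀ y ∈ A, ∀ z ∈ A, ∀ l : ℝ, 0 < l → l < 1 →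
    x = l • y + (1 - l) • z → x = y ∧ x = z

section AsymmetricNorm

variable {X : Type*} [AddCommGroup X] {q : X → ℝ}

lemma map_zero_of_posHomogeneous [Module ℝ X]
    (hqh : ∀ (t : ℝ) (x : X), 0 ≤ t → q (t • x) = t * q x) : q 0 = 0 := by
  simpa using hqh 0 0 le_rfl

lemma asymBall_mem_nhds (hq : q 0 = 0) (z : X) {ε : ℝ} (hε : 0 < ε) :
    asymBall q z ε ∈ @nhds X (tauQ q) z :=
  @IsOpen.mem_nhds X (tauQ q) _ _
    (TopologicalSpace.isOpen_generateFrom_of_mem ⟨z, ε, hε, rfl⟩) (by simpa [asymBall, hq])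

lemma upperSemicontinuous_sub_right (hq : q 0 = 0) (hqtri : ∀ x y, q (x + y) ≤ q x + q y)
    (y : X) : @UpperSemicontinuous X ℝ (tauQ q) _ fun p => q (p - y) := by
  intro z C hC
  filter_upwards [asymBall_mem_nhds hq z (sub_pos.2 hC)] with p hp
  calc q (p - y) = q ((p - z) + (z - y)) := by rw [sub_add_sub_cancel]
    _ ≤ q (p - z) + q (z - y) := hqtri _ _
    _ < C := by rw [asymBall, mem_ofPred_eq] at hp; linarith

end AsymmetricNorm

lemma nonpos_of_forall_nonneg_mul_le {a C : ℝ} (h : ∀ t, 0 ≤ t → t * a ≤ C) : a ≤ 0 := by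
  by_contra! ha
  have := h ((|C| + 1) / a) (by positivity)
  rw [div_mul_cancel₀ _ ha.ne'] at this
  linarith [le_abs_self C]

theorem stmt12_general {X : Type*} [AddCommGroup X] [Module ℝ X] (q : X → ℝ)
    (hq0 : ∀ x, 0 ≤ q x)
    (hqh : ∀ (t : ℝ) (x : X), 0 ≤ t → q (t • x) = t * q x)
    (hqtri : ∀ x y, q (x + y) ≤ q x + q y)
    (K : Set X) (hK : @IsCompact X (tauQ q) K) (x y : X)
    (hR : {p | ∃ t : ℝ, 0 ≤ t ∧ p = t • x + y} ⊆ K) :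
    {p | ∃ t : ℝ, 0 ≤ t ∧ p = t • x} ⊆ theta0 q := by
  have hq_zero := map_zero_of_posHomogeneous hqh
  let := tauQ q
  obtain ⟨C, hC⟩ :=
    ((upperSemicontinuous_sub_right hq_zero hqtri y).upperSemicontinuousOn K).bddAbove_of_isCompact hK
  have hqx : q x ≤ 0 := nonpos_of_forall_nonneg_mul_le fun t ht => by
    rw [← hqh t x ht, ← add_sub_cancel_right (t • x) y]
    exact hC ⟨_, hR ⟨t, ht, rfl⟩, rfl⟩
  rintro _ ⟨t, ht, rfl⟩
  rw [theta0, mem_ofPred_eq, hqh t x ht, le_antisymm hqx (hq0 x), mul_zero]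

theorem stmt12 {X : Type*} [AddCommGroup X] [Module ℝ X] (q : X → ℝ)
    (hq0 : ∀ x, 0 ≤ q x)
    (hqh : ∀ (t : ℝ) (x : X), 0 ≤ t → q (t • x) = t * q x)
    (hqtri : ∀ x y, q (x + y) ≤ q x + q y)
    (hqsep : ∀ x, (q x = 0 ∧ q (-x) = 0) ↔ x = 0)
    (K : Set X) (hK : @IsCompact X (tauQ q) K) (x y : X)
    (hR : {p | ∃ t : ℝ, 0 ≤ t ∧ p = t • x + y} ⊆ K) :
    {p | ∃ t : ℝ, 0 ≤ t ∧ p = t • x} ⊆ theta0 q :=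
  stmt12_general q hq0 hqh hqtri K hK x y hR
end

section
/- Let K ⊆ X be a nonempty q-compact convex set such that the set K + θ(0), equipped with the subspace topology inherited from τ_{q^s}, is locally compact. Then K has at least one extreme point. -/
/-!
The Krein–Milman argument needs neither a Hausdorff topology nor a topological vector space, only
compactness and enough upper semicontinuous linear functionals. By Zorn's lemma and compactness
there is a minimal nonempty extreme subset `t` of `K` that is closed in `K`. If `t` contained
`x ≠ y`, say with `q (x - y) > 0`, Hahn–Banach gives a linear `g ≤ q` with `g (x - y) = q (x - y)`.
Domination by `q` makes `g` upper semicontinuous for `τ_q`, so `g` attains its maximum on the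
compact set `t`, and the set where it does is a strictly smaller subset of the same kind.
-/

open Set Pointwise

open Topology

lemma isExtreme_setOf_isMaxOn {E : Type*} [AddCommGroup E] [Module ℝ E] (l : E →ₗ[ℝ] ℝ)
    (t : Set E) : IsExtreme ℝ t {x ∈ t | IsMaxOn l t x} := by
  refine ⟨sep_subset _ _, fun x₁ hx₁ x₂ hx₂ x ⟨hxt, hxmax⟩ hx => ⟨hx₁, fun y hy => ?_⟩⟩
  have hl : ConvexOn ℝ univ l := l.convexOn convex_univ
  rw [(hxmax hx₁).antisymm (hl.le_left_of_right_le (mem_univ _) (mem_univ _) hx (hxmax hx₂))]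
  exact hxmax hy

section KreinMilman

variable {E : Type*} [AddCommGroup E] [Module ℝ E] [TopologicalSpace E] {s t : Set E}

/-- `s ∩ closure t ⊆ t` says that `t` is closed in the subspace topology of `s`. -/
def IsClosedExtremeSubset (s t : Set E) : Prop :=
  t.Nonempty ∧ IsExtreme ℝ s t ∧ s ∩ closure t ⊆ t

lemma isClosedExtremeSubset_self (hne : s.Nonempty) : IsClosedExtremeSubset s s :=
  ⟨hne, IsExtreme.rfl, inter_subset_left⟩

lemma IsClosedExtremeSubset.isCompact (hs : IsCompact s) (ht : IsClosedExtremeSubset s t) :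
    IsCompact t := by
  have : s ∩ closure t = t := ht.2.2.antisymm (subset_inter ht.2.1.subset subset_closure)
  exact this ▸ hs.inter_right isClosed_closure

lemma IsClosedExtremeSubset.setOf_isMaxOn (hs : IsCompact s) (ht : IsClosedExtremeSubset s t)
    (l : E →ₗ[ℝ] ℝ) (hl : UpperSemicontinuous l) :
    IsClosedExtremeSubset s {x ∈ t | IsMaxOn l t x} := by
  obtain ⟨a, hat, hamax⟩ := (hl.upperSemicontinuousOn t).exists_isMaxOn ht.1 (ht.isCompact hs)
  have hmax : {x ∈ t | IsMaxOn l t x} = t ∩ l ⁻¹' Ici (l a) := by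
    ext x
    exact and_congr_right fun _ =>
      ⟨fun h => h hat, fun h => isMaxOn_iff.2 fun _ hy => le_trans (hamax hy) h⟩
  refine ⟨⟨a, hat, hamax⟩, ht.2.1.trans (isExtreme_setOf_isMaxOn l t), ?_⟩
  rw [hmax]
  calc s ∩ closure (t ∩ l ⁻¹' Ici (l a))
      ⊆ (s ∩ closure t) ∩ l ⁻¹' Ici (l a) := by
        rw [inter_assoc]
        exact inter_subset_inter_right _
          (closure_minimal (inter_subset_inter subset_closure subset_rfl)
            (isClosed_closure.inter (hl.isClosed_preimage _)))
    _ ⊆ t ∩ l ⁻¹' Ici (l a) := inter_subset_inter_left _ ht.2.2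

lemma IsClosedExtremeSubset.sInter (hs : IsCompact s) {c : Set (Set E)}
    (hc : IsChain (· ⊆ ·) c) (hcne : c.Nonempty) (hcs : ∀ t ∈ c, IsClosedExtremeSubset s t) :
    IsClosedExtremeSubset s (⋂₀ c) := by
  have hextreme : IsExtreme ℝ s (⋂₀ c) := isExtreme_sInter hcne fun t ht => (hcs t ht).2.1
  have hclosed : s ∩ closure (⋂₀ c) ⊆ ⋂₀ c := fun x hx t ht =>
    (hcs t ht).2.2 ⟨hx.1, closure_mono (sInter_subset_of_mem ht) hx.2⟩
  refine ⟨?_, hextreme, hclosed⟩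
  have : Nonempty c := hcne.to_subtype
  have hdir : Directed (· ⊇ ·) (Subtype.val : c → Set E) := fun t₁ t₂ =>
    (hc.total t₁.2 t₂.2).elim (fun h => ⟨t₁, subset_rfl, h⟩) fun h => ⟨t₂, h, subset_rfl⟩
  suffices (s ∩ ⋂ t : c, closure (t : Set E)).Nonempty from
    this.mono fun x hx t ht => (hcs t ht).2.2 ⟨hx.1, mem_iInter.1 hx.2 ⟨t, ht⟩⟩
  refine hs.inter_iInter_nonempty _ (fun _ => isClosed_closure) fun u => ?_
  obtain ⟨t₀, ht₀⟩ := hdir.finset_le u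
  obtain ⟨x, hx⟩ := (hcs t₀ t₀.2).1
  exact ⟨x, (hcs t₀ t₀.2).2.1.subset hx, mem_iInter₂.2 fun t ht => subset_closure (ht₀ t ht hx)⟩

end KreinMilman

theorem IsCompact.extremePoints_nonempty_of_separating {E : Type*} [AddCommGroup E] [Module ℝ E]
    [TopologicalSpace E] {s : Set E} (hs : IsCompact s) (hne : s.Nonempty)
    (hsep : ∀ x ∈ s, ∀ y ∈ s, x ≠ y → ∃ l : E →ₗ[ℝ] ℝ, UpperSemicontinuous l ∧ l x ≠ l y) :
    (s.extremePoints ℝ).Nonempty := by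
  obtain ⟨t, -, ht⟩ := zorn_superset_nonempty {t | IsClosedExtremeSubset s t}
    (fun c hcs hc hcne => ⟨⋂₀ c, IsClosedExtremeSubset.sInter hs hc hcne hcs,
      fun _ => sInter_subset_of_mem⟩) s (isClosedExtremeSubset_self hne)
  obtain ⟨⟨x, hxt⟩, hts, -⟩ := ht.prop
  refine ⟨x, isExtreme_singleton.1 ?_⟩
  rwa [← eq_singleton_iff_unique_mem.2 ⟨hxt, fun y hyt => ?_⟩]
  by_contra hyx
  obtain ⟨l, hl, hlyx⟩ := hsep y (hts.subset hyt) x (hts.subset hxt) hyx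
  -- `t` is minimal, so it equals the face on which `l` is maximal; but `l y ≠ l x`
  have hmax : t ⊆ {z ∈ t | IsMaxOn l t z} := ht.2 (ht.prop.setOf_isMaxOn hs l hl) (sep_subset _ _)
  exact hlyx (le_antisymm ((hmax hxt).2 hyt) ((hmax hyt).2 hxt))

lemma isOpen_asymBall {X : Type*} [AddCommGroup X] (q : X → ℝ) (x : X) {ε : ℝ} (hε : 0 < ε) :
    IsOpen[tauQ q] (asymBall q x ε) :=
  TopologicalSpace.isOpen_generateFrom_of_mem ⟨x, ε, hε, rfl⟩

section AsymmetricNorm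

variable {X : Type*} [AddCommGroup X] [Module ℝ X] {q : X → ℝ}

lemma upperSemicontinuous_of_le_asymNorm (hq : q 0 = 0) (g : X →ₗ[ℝ] ℝ) (hg : ∀ x, g x ≤ q x) :
    @UpperSemicontinuous X ℝ (tauQ q) _ g := by
  let := tauQ q
  intro x r hxr
  have hx : x ∈ asymBall q x (r - g x) := by
    simp only [asymBall, mem_ofPred_eq, sub_self, hq]
    linarith
  filter_upwards [(isOpen_asymBall q x (by linarith)).mem_nhds hx] with w hw
  have := hg (w - x)
  simp only [asymBall, mem_ofPred_eq, map_sub] at hw this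
  linarith

lemma exists_linearMap_le_asymNorm_eq (hq0 : ∀ x, 0 ≤ q x)
    (hqh : ∀ (t : ℝ) (x : X), 0 ≤ t → q (t • x) = t * q x) (hqtri : ∀ x y, q (x + y) ≤ q x + q y)
    {v : X} (hv : v ≠ 0) : ∃ g : X →ₗ[ℝ] ℝ, (∀ x, g x ≤ q x) ∧ g v = q v := by
  let f : X →ₗ.[ℝ] ℝ := LinearPMap.mkSpanSingleton v (q v) hv
  obtain ⟨g, hgf, hgq⟩ :=
    exists_extension_of_le_sublinear f q (fun c hc x => hqh c x hc.le) hqtri <| by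
      rintro ⟨x, hx⟩
      obtain ⟨t, rfl⟩ := Submodule.mem_span_singleton.1 hx
      rw [LinearPMap.mkSpanSingleton'_apply, smul_eq_mul]
      rcases le_or_gt 0 t with ht | ht
      · exact (hqh t v ht).ge
      · exact (mul_nonpos_of_nonpos_of_nonneg ht.le (hq0 v)).trans (hq0 _)
  exact ⟨g, hgq, (hgf _).trans (LinearPMap.mkSpanSingleton_apply ℝ ℝ hv (q v))⟩

lemma exists_upperSemicontinuous_linearMap_ne (hq0 : ∀ x, 0 ≤ q x)
    (hqh : ∀ (t : ℝ) (x : X), 0 ≤ t → q (t • x) = t * q x) (hqtri : ∀ x y, q (x + y) ≤ q x + q y)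
    (hqsep : ∀ x, (q x = 0 ∧ q (-x) = 0) ↔ x = 0) {x y : X} (hxy : x ≠ y) :
    ∃ g : X →ₗ[ℝ] ℝ, @UpperSemicontinuous X ℝ (tauQ q) _ g ∧ g x ≠ g y := by
  obtain ⟨v, hv, hqv⟩ : ∃ v, (v = x - y ∨ v = y - x) ∧ 0 < q v := by
    by_contra! h
    refine hxy (sub_eq_zero.1 ((hqsep _).1 ⟨?_, ?_⟩))
    · exact (h _ (Or.inl rfl)).antisymm (hq0 _)
    · exact (neg_sub x y ▸ h _ (Or.inr rfl)).antisymm (hq0 _)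
  have hq00 : q 0 = 0 := by simpa using hqh 0 0 le_rfl
  have hv0 : v ≠ 0 := fun h => hqv.ne' (by rw [h, hq00])
  obtain ⟨g, hgq, hgv⟩ := exists_linearMap_le_asymNorm_eq hq0 hqh hqtri hv0
  refine ⟨g, upperSemicontinuous_of_le_asymNorm hq00 g hgq, fun h => ?_⟩
  rcases hv with rfl | rfl <;> simp only [map_sub, h, sub_self] at hgv <;> linarith

end AsymmetricNorm

lemma isExtremePt_of_mem_extremePoints {X : Type*} [AddCommGroup X] [Module ℝ X] {A : Set X}
    {x : X} (hx : x ∈ A.extremePoints ℝ) : IsExtremePt A x := by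
  refine ⟨hx.1, fun y hy z hz l hl0 hl1 hxyz => ?_⟩
  have hseg : x ∈ openSegment ℝ y z := ⟨l, 1 - l, hl0, by linarith, by ring, hxyz.symm⟩
  obtain ⟨hyx, hzx⟩ := (mem_extremePoints.1 hx).2 y hy z hz hseg
  exact ⟨hyx.symm, hzx.symm⟩

theorem stmt15_general {X : Type*} [AddCommGroup X] [Module ℝ X] (q : X → ℝ)
    (hq0 : ∀ x, 0 ≤ q x)
    (hqh : ∀ (t : ℝ) (x : X), 0 ≤ t → q (t • x) = t * q x)
    (hqtri : ∀ x y, q (x + y) ≤ q x + q y)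
    (hqsep : ∀ x, (q x = 0 ∧ q (-x) = 0) ↔ x = 0)
    (K : Set X) (hne : K.Nonempty) (hK : @IsCompact X (tauQ q) K) :
    ∃ x, IsExtremePt K x := by
  let := tauQ q
  obtain ⟨x, hx⟩ := hK.extremePoints_nonempty_of_separating hne fun _ _ _ _ hxy =>
    exists_upperSemicontinuous_linearMap_ne hq0 hqh hqtri hqsep hxy
  exact ⟨x, isExtremePt_of_mem_extremePoints hx⟩

theorem stmt15 {X : Type*} [AddCommGroup X] [Module ℝ X] (q : X → ℝ)
    (hq0 : ∀ x, 0 ≤ q x)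
    (hqh : ∀ (t : ℝ) (x : X), 0 ≤ t → q (t • x) = t * q x)
    (hqtri : ∀ x y, q (x + y) ≤ q x + q y)
    (hqsep : ∀ x, (q x = 0 ∧ q (-x) = 0) ↔ x = 0)
    (K : Set X) (hne : K.Nonempty) (hK : @IsCompact X (tauQ q) K) (hconv : Convex ℝ K)
    (hlc : @LocallyCompactSpace (K + theta0 q : Set X)
      (TopologicalSpace.induced Subtype.val (tauQs q))) :
    ∃ x, IsExtremePt K x :=
  stmt15_general q hq0 hqh hqtri hqsep K hne hK
end

section
/- Let X be finite dimensional over ℝ and let K ⊆ X be a nonempty q-compact convex set. Let E(K) denote the set of extreme points of K + θ(0) and S(K) the convex hull of E(K). If K' ⊆ X is any subset satisfying S(K) ⊆ K' ⊆ S(K) + θ(0), then K' is q-compact. -/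
open Set Pointwise

/-!
Open sets of `τ_q` are stable under adding `θ(0)`, so a set `B` is `q`-compact as soon as
`B ⊆ A + θ(0)` and `A ⊆ B + θ(0)` for some `q`-compact `A`. Take `A = K`: with `C = K + θ(0)`,
the extreme points of `C` lie in `K`, hence `S(K) ⊆ K`, and it remains to show `K ⊆ S(K) + θ(0)`.

For the symmetrised norm `q^s` the set `C` is closed, and since `K` is `q`-bounded every
recession direction of `C` lies in the salient cone `θ(0)`. A theorem of Klee type now applies:
a closed convex set in finite dimension lies in the convex hull of its extreme points plus any
salient cone containing its recession directions. It is proved by induction on the dimension: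
frontier points lie on a proper exposed face, and an interior point lies on a line whose two
directions either leave `C` through the frontier or are recession directions.
-/

open Function Module Topology

section Convex

variable {E F : Type*} [AddCommGroup E] [Module ℝ E] [AddCommGroup F] [Module ℝ F]

theorem setOf_isExtremePt_eq (A : Set E) : {x | IsExtremePt A x} = A.extremePoints ℝ := by
  ext x
  simp only [IsExtremePt, mem_ofPred_eq, mem_extremePoints, openSegment_eq_image, mem_image,
    mem_Ioo]
  refine and_congr_right fun _ => forall₄_congr fun y _ z _ => ⟨?_, ?_⟩
  · rintro h ⟨l, ⟨hl0, hl1⟩, rfl⟩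
    obtain ⟨hy, hz⟩ := h (1 - l) (by linarith) (by linarith) (by module)
    exact ⟨hy.symm, hz.symm⟩
  · intro h l hl0 hl1 hx
    obtain ⟨hy, hz⟩ := h ⟨1 - l, ⟨by linarith, by linarith⟩, by rw [hx]; module⟩
    exact ⟨hy.symm, hz.symm⟩

theorem extremePoints_add_pointedCone_subset (K : Set E) (Θ : PointedCone ℝ E) :
    (K + Θ).extremePoints ℝ ⊆ K := by
  rintro x ⟨⟨k, hk, t, ht, hx⟩, hext⟩
  have hmid : x ∈ openSegment ℝ (k + 0) (k + (2 : ℝ) • t) :=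
    ⟨1 / 2, 1 / 2, by norm_num, by norm_num, by norm_num, by rw [← hx]; module⟩
  rw [← hext (add_mem_add hk Θ.zero_mem) (add_mem_add hk (Θ.smul_mem zero_le_two ht)) hmid,
    add_zero]
  exact hk

theorem PointedCone.salient_comap {Θ : PointedCone ℝ E} (hΘ : (Θ : ConvexCone ℝ E).Salient)
    {f : F →ₗ[ℝ] E} (hf : Injective f) : (Θ.comap f : ConvexCone ℝ F).Salient :=
  fun x hx hx0 hnx => hΘ (f x) hx (by simpa using hf.ne hx0) (by simpa using hnx)

theorem image_extremePoints_preimage_subset (φ : F →ᵃ[ℝ] E) (hφ : Injective φ) {C : Set E}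
    (hC : C ⊆ range φ) : φ '' (φ ⁻¹' C).extremePoints ℝ ⊆ C.extremePoints ℝ := by
  rintro _ ⟨e, he, rfl⟩
  refine ⟨he.1, fun _ hx₁ _ hx₂ hseg => ?_⟩
  obtain ⟨y₁, rfl⟩ := hC hx₁
  obtain ⟨y₂, rfl⟩ := hC hx₂
  rw [← image_openSegment] at hseg
  obtain ⟨z, hz, hze⟩ := hseg
  rw [hφ hze] at hz
  rw [he.2 hx₁ hx₂ hz]

theorem subset_convexHull_extremePoints_add_of_preimage (φ : F →ᵃ[ℝ] E) (hφ : Injective φ)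
    {C : Set E} (hC : C ⊆ range φ) (Θ : PointedCone ℝ E)
    (h : φ ⁻¹' C ⊆ convexHull ℝ ((φ ⁻¹' C).extremePoints ℝ) + Θ.comap φ.linear) :
    C ⊆ convexHull ℝ (C.extremePoints ℝ) + Θ := by
  intro x hx
  obtain ⟨y, rfl⟩ := hC hx
  obtain ⟨s, hs, θ, hθ, rfl⟩ := h hx
  refine ⟨φ s, ?_, φ.linear θ, hθ, ?_⟩
  · refine convexHull_mono (image_extremePoints_preimage_subset φ hφ hC) ?_
    rw [← φ.image_convexHull]
    exact mem_image_of_mem φ hs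
  · simpa [add_comm] using (φ.map_vadd s θ).symm

end Convex

section Klee

variable {E : Type*} [NormedAddCommGroup E] [NormedSpace ℝ E]

theorem IsClosed.exists_add_smul_mem_frontier_or_forall {C : Set E} (hC : IsClosed C) {y : E}
    (hy : y ∈ C) (w : E) :
    (∃ t ≥ (0 : ℝ), y + t • w ∈ frontier C) ∨ ∀ t ≥ (0 : ℝ), y + t • w ∈ C := by
  by_contra! h
  obtain ⟨hfr, t₁, ht₁, hout⟩ := h
  have hg : Continuous fun t : ℝ => y + t • w := by fun_prop
  set S := Icc 0 t₁ ∩ (fun t : ℝ => y + t • w) ⁻¹' C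
  have hS : IsCompact S := isCompact_Icc.inter_right (hC.preimage hg)
  have hmax : sSup S ∈ S := hS.sSup_mem ⟨0, ⟨le_rfl, ht₁⟩, by simpa using hy⟩
  have hint : y + sSup S • w ∈ interior C := by
    by_contra hnot
    exact hfr _ hmax.1.1 (hC.frontier_eq ▸ ⟨hmax.2, hnot⟩)
  have hlt : sSup S < t₁ := lt_of_le_of_ne hmax.1.2 fun heq => hout (heq ▸ hmax.2)
  have hnear : ∀ᶠ t in 𝓝[>] sSup S, y + t • w ∈ interior C ∧ t ∈ Ioo (sSup S) t₁ :=
    (Filter.Eventually.filter_mono nhdsWithin_le_nhds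
      (hg.continuousAt.preimage_mem_nhds (isOpen_interior.mem_nhds hint))).and
      (Ioo_mem_nhdsGT hlt)
  obtain ⟨t, htC, ht⟩ := hnear.exists
  have htS : t ∈ S := ⟨⟨hmax.1.1.trans ht.1.le, ht.2.le⟩, interior_subset (s := C) htC⟩
  exact (le_csSup hS.bddAbove htS).not_gt ht.1

theorem IsClosed.subset_of_frontier_subset [Nontrivial E] {C G : Set E} (hC : IsClosed C)
    {Θ : PointedCone ℝ E} (hΘ : (Θ : ConvexCone ℝ E).Salient)
    (hrec : ∀ y ∈ C, ∀ v, (∀ t ≥ (0 : ℝ), y + t • v ∈ C) → v ∈ Θ)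
    (hG : Convex ℝ G) (hGΘ : G + Θ ⊆ G) (hfr : frontier C ⊆ G) : C ⊆ G := by
  intro y hy
  have hray : ∀ v, (∃ t ≥ (0 : ℝ), y + t • v ∈ G) ∨ v ∈ Θ := fun v =>
    (hC.exists_add_smul_mem_frontier_or_forall hy v).imp
      (fun ⟨t, ht, hfrt⟩ => ⟨t, ht, hfr hfrt⟩) (hrec y hy v)
  have hshift : ∀ {t : ℝ} {v : E}, 0 ≤ t → y + t • v ∈ G → -v ∈ Θ → y ∈ G := fun ht hG hv => by
    simpa using hGΘ (add_mem_add hG (Θ.smul_mem ht hv))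
  obtain ⟨w, hw⟩ := exists_ne (0 : E)
  rcases hray w, hray (-w) with ⟨⟨a, ha, hya⟩ | hpos, ⟨b, hb, hyb⟩ | hneg⟩
  · have hline : Convex ℝ ((fun t : ℝ => y + t • w) ⁻¹' G) := by
      have hmap : (fun t : ℝ => y + t • w) = AffineMap.lineMap y (y + w) := by
        ext t
        simp [AffineMap.lineMap_apply, add_comm]
      exact hmap ▸ hG.affine_preimage (AffineMap.lineMap y (y + w))
    have hyb' : y + (-b) • w ∈ G := by simpa using hyb
    simpa using hline.ordConnected.out hyb' hya ⟨by linarith, ha⟩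
  · exact hshift ha hya hneg
  · exact hshift hb hyb (by simpa using hpos)
  · exact (hΘ w hpos hw hneg).elim

theorem Convex.exists_mem_toExposed_of_notMem_interior {C : Set E} (hCc : Convex ℝ C)
    (hint : (interior C).Nonempty) {p : E} (hpC : p ∈ C) (hp : p ∉ interior C) :
    ∃ f : StrongDual ℝ E, LinearMap.ker (f : E →ₗ[ℝ] ℝ) ≠ ⊤ ∧ p ∈ f.toExposed C ∧
      ∀ x ∈ f.toExposed C, x - p ∈ LinearMap.ker (f : E →ₗ[ℝ] ℝ) := by
  obtain ⟨f, hf0, hfp⟩ := geometric_hahn_banach_of_nonempty_interior_point hCc hp hint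
  refine ⟨f, ?_, ⟨hpC, hfp⟩, fun x hx => ?_⟩
  · rw [Ne, LinearMap.ker_eq_top]
    exact_mod_cast hf0
  · have := hx.2 p hpC
    have := hfp x hx.1
    simp only [LinearMap.mem_ker, ContinuousLinearMap.coe_coe, map_sub]
    linarith

theorem IsClosed.subset_convexHull_extremePoints_add [FiniteDimensional ℝ E] {C : Set E}
    (hC : IsClosed C) (hCc : Convex ℝ C) {Θ : PointedCone ℝ E}
    (hΘ : (Θ : ConvexCone ℝ E).Salient)
    (hrec : ∀ y ∈ C, ∀ v, (∀ t ≥ (0 : ℝ), y + t • v ∈ C) → v ∈ Θ) :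
    C ⊆ convexHull ℝ (C.extremePoints ℝ) + Θ := by
  induction hn : finrank ℝ E using Nat.strong_induction_on generalizing E with
  | _ n ih =>
  -- the induction hypothesis, applied inside a proper affine subspace `p + W`
  have hproper : ∀ (W : Submodule ℝ E) (p : E) {D : Set E}, W ≠ ⊤ → IsClosed D → Convex ℝ D →
      D ⊆ C → (∀ x ∈ D, x - p ∈ W) → D ⊆ convexHull ℝ (D.extremePoints ℝ) + Θ := by
    intro W p D hW hD hDc hDC hDW
    let φ : W →ᵃ[ℝ] E := (AffineEquiv.constVAdd ℝ E p).toAffineMap.comp W.subtype.toAffineMap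
    have hφ : ∀ v, φ v = p + v := fun v => rfl
    have hφl : ∀ v, φ.linear v = v := fun v => rfl
    have hφinj : Injective φ := fun v w h => Subtype.ext (add_left_cancel h)
    have hφlin : Injective φ.linear := W.injective_subtype
    refine subset_convexHull_extremePoints_add_of_preimage φ hφinj
      (fun x hx => ⟨⟨x - p, hDW x hx⟩, by simp [hφ]⟩) Θ ?_
    refine ih _ (hn ▸ Submodule.finrank_lt hW) (hD.preimage ?_) (hDc.affine_preimage φ)
      (Θ.salient_comap hΘ hφlin) (fun y hy v hv => hrec _ (hDC hy) _ fun t ht => ?_) rfl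
    · exact continuous_const.add continuous_subtype_val
    · exact hDC (by simpa [hφ, hφl, add_assoc] using hv t ht)
  rcases subsingleton_or_nontrivial E with hE | hE
  · intro y hy
    exact ⟨y, subset_convexHull ℝ _ ((C.extremePoints_eq_self (𝕜 := ℝ)).ge hy), 0, Θ.zero_mem,
      add_zero y⟩
  by_cases hint : (interior C).Nonempty
  · refine hC.subset_of_frontier_subset hΘ hrec ((convex_convexHull ℝ _).add Θ.convex)
      (by rw [add_assoc]; exact add_subset_add_left Θ.toAddSubmonoid.coe_add_self_eq.le)
      fun p hp => ?_
    obtain ⟨f, hker, hpf, hfp⟩ :=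
      hCc.exists_mem_toExposed_of_notMem_interior hint (hC.frontier_subset hp) hp.2
    have hF : IsExposed ℝ C (f.toExposed C) := ContinuousLinearMap.toExposed.isExposed
    exact add_subset_add_right (convexHull_mono hF.isExtreme.extremePoints_subset_extremePoints)
      (hproper _ p hker (hF.isClosed hC) (hF.convex hCc) hF.subset hfp hpf)
  · intro y hy
    have hspan : vectorSpan ℝ C ≠ ⊤ := by
      rwa [Ne, ← AffineSubspace.affineSpan_eq_top_iff_vectorSpan_eq_top_of_nonempty ℝ E E ⟨y, hy⟩,
        ← hCc.interior_nonempty_iff_affineSpan_eq_top]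
    exact hproper _ y hspan hC hCc subset_rfl (fun x hx => vsub_mem_vectorSpan ℝ hx hy) hy

end Klee

section TauQ

variable {X : Type*} [AddCommGroup X] {q : X → ℝ}

theorem isOpen_tauQ_asymBall (x : X) {ε : ℝ} (hε : 0 < ε) : IsOpen[tauQ q] (asymBall q x ε) :=
  TopologicalSpace.GenerateOpen.basic _ ⟨x, ε, hε, rfl⟩

theorem add_theta0_subset_of_isOpen (hqtri : ∀ x y, q (x + y) ≤ q x + q y) {U : Set X}
    (hU : IsOpen[tauQ q] U) : U + theta0 q ⊆ U := by
  induction hU with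
  | basic S hS =>
    obtain ⟨x₀, ε, -, rfl⟩ := hS
    rintro _ ⟨x, hx, t, ht, rfl⟩
    have h := hqtri (x - x₀) t
    rw [sub_add_eq_add_sub] at h
    simp only [asymBall, theta0, mem_ofPred_eq] at hx ht ⊢
    linarith
  | univ => exact subset_univ _
  | inter S T _ _ ihS ihT =>
    exact fun _ ⟨x, hx, t, ht, hxt⟩ => ⟨ihS ⟨x, hx.1, t, ht, hxt⟩, ihT ⟨x, hx.2, t, ht, hxt⟩⟩
  | sUnion 𝒮 _ ih =>
    rintro _ ⟨x, ⟨S, hS, hxS⟩, t, ht, rfl⟩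
    exact ⟨S, hS, ih S hS ⟨x, hxS, t, ht, rfl⟩⟩

theorem IsCompact.of_subset_add_theta0 (hqtri : ∀ x y, q (x + y) ≤ q x + q y) {A B : Set X}
    (hA : @IsCompact X (tauQ q) A) (hBA : B ⊆ A + theta0 q) (hAB : A ⊆ B + theta0 q) :
    @IsCompact X (tauQ q) B := by
  refine @isCompact_of_finite_subcover X (tauQ q) B fun U hU hcov => ?_
  have hopen : ∀ s : Set _, IsOpen[tauQ q] (⋃ i ∈ s, U i) := fun s =>
    @isOpen_biUnion X _ (tauQ q) _ _ fun i _ => hU i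
  obtain ⟨F, hF⟩ := @IsCompact.elim_finite_subcover X (tauQ q) _ _ hA U hU
    (hAB.trans ((add_subset_add_right hcov).trans (by
      simpa using add_theta0_subset_of_isOpen hqtri (hopen univ))))
  exact ⟨F, hBA.trans ((add_subset_add_right hF).trans
    (add_theta0_subset_of_isOpen hqtri (hopen F)))⟩

theorem IsCompact.bddAbove_image_sub {K : Set X} (hK : @IsCompact X (tauQ q) K) (x₀ : X) :
    BddAbove ((fun y => q (y - x₀)) '' K) := by
  obtain ⟨F, hF⟩ := @IsCompact.elim_finite_subcover X (tauQ q) _ _ hK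
    (fun n : ℕ => asymBall q x₀ (n + 1)) (fun n => isOpen_tauQ_asymBall x₀ (by positivity))
    fun y _ => mem_iUnion.2 ((exists_nat_gt (q (y - x₀))).imp fun n hn =>
      show q (y - x₀) < n + 1 by linarith)
  refine ⟨F.sup id + 1, ?_⟩
  rintro _ ⟨y, hy, rfl⟩
  obtain ⟨n, hnF, hn⟩ := mem_iUnion₂.1 (hF hy)
  have hle : (n : ℝ) ≤ (F.sup id : ℕ) := by exact_mod_cast Finset.le_sup (f := id) hnF
  exact (show q (y - x₀) < n + 1 from hn).le.trans (by linarith)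

theorem IsCompact.bddAbove_image_sub_add_theta0 (hqtri : ∀ x y, q (x + y) ≤ q x + q y)
    {K : Set X} (hK : @IsCompact X (tauQ q) K) (x₀ : X) :
    BddAbove ((fun y => q (y - x₀)) '' (K + theta0 q)) := by
  obtain ⟨N, hN⟩ := hK.bddAbove_image_sub x₀
  refine ⟨N, ?_⟩
  rintro _ ⟨_, ⟨k, hk, t, ht, rfl⟩, rfl⟩
  have h := hqtri (k - x₀) t
  rw [sub_add_eq_add_sub, show q t = 0 from ht, add_zero] at h
  exact h.trans (hN ⟨k, hk, rfl⟩)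

end TauQ

theorem IsCompact.isClosed_add_theta0 {X : Type*} [NormedAddCommGroup X] {q : X → ℝ}
    (hq0 : ∀ x, 0 ≤ q x) (hqtri : ∀ x y, q (x + y) ≤ q x + q y) (hqle : ∀ x, q x ≤ ‖x‖)
    {K : Set X} (hK : @IsCompact X (tauQ q) K) : IsClosed (K + theta0 q) := by
  rw [← isOpen_compl_iff, isOpen_iff_mem_nhds]
  intro z hz
  have hpos : ∀ k ∈ K, 0 < q (z - k) := fun k hk =>
    (hq0 _).lt_of_ne fun h => hz ⟨k, hk, z - k, h.symm, add_sub_cancel k z⟩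
  have hq00 : q 0 = 0 := le_antisymm (by simpa using hqle 0) (hq0 0)
  obtain ⟨F, hFK, hKF⟩ := @IsCompact.elim_nhds_subcover X (tauQ q) _ hK
    (fun k => asymBall q k (q (z - k) / 2)) fun k hk =>
      @IsOpen.mem_nhds X (tauQ q) _ _ (isOpen_tauQ_asymBall k (half_pos (hpos k hk)))
        (by simpa [asymBall, hq00] using hpos k hk)
  refine Filter.mem_of_superset ((Filter.biInter_finset_mem F).2 fun k hk =>
    Metric.ball_mem_nhds z (half_pos (hpos k (hFK k hk)))) ?_
  rintro w hw ⟨k', hk', t, ht, rfl⟩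
  obtain ⟨k, hkF, hk'k⟩ := mem_iUnion₂.1 (hKF hk')
  have hzw : q (z - (k' + t)) < q (z - k) / 2 :=
    (hqle _).trans_lt (by simpa [dist_eq_norm, norm_sub_rev] using mem_iInter₂.1 hw k hkF)
  have h₁ := hqtri (z - (k' + t)) (k' - k + t)
  have h₂ := hqtri (k' - k) t
  have h₃ : q (k' - k) < q (z - k) / 2 := hk'k
  have ht0 : q t = 0 := ht
  rw [show z - (k' + t) + (k' - k + t) = z - k by abel] at h₁
  linarith

structure IsAsymmetricNorm {X : Type*} [AddCommGroup X] [Module ℝ X] (q : X → ℝ) : Prop where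
  nonneg : ∀ x, 0 ≤ q x
  smul : ∀ (t : ℝ) (x : X), 0 ≤ t → q (t • x) = t * q x
  add_le : ∀ x y, q (x + y) ≤ q x + q y
  eq_zero_iff : ∀ x, (q x = 0 ∧ q (-x) = 0) ↔ x = 0

namespace IsAsymmetricNorm

variable {X : Type*} [AddCommGroup X] [Module ℝ X] {q : X → ℝ}

theorem map_zero (hq : IsAsymmetricNorm q) : q 0 = 0 := by
  simpa using hq.smul 0 0 le_rfl

def theta0Cone (hq : IsAsymmetricNorm q) : PointedCone ℝ X where
  carrier := theta0 q
  add_mem' {x y} hx hy := le_antisymm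
    ((hq.add_le x y).trans_eq (by rw [show q x = 0 from hx, show q y = 0 from hy, add_zero]))
    (hq.nonneg _)
  zero_mem' := hq.map_zero
  smul_mem' c x hx := by
    change q ((c : ℝ) • x) = 0
    rw [hq.smul _ _ c.2, show q x = 0 from hx, mul_zero]

@[simp] theorem coe_theta0Cone (hq : IsAsymmetricNorm q) : (hq.theta0Cone : Set X) = theta0 q :=
  rfl

theorem salient_theta0Cone (hq : IsAsymmetricNorm q) :
    (hq.theta0Cone : ConvexCone ℝ X).Salient :=
  fun x hx hx0 hnx => hx0 ((hq.eq_zero_iff x).1 ⟨hx, hnx⟩)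

-- `abbrev`s, so that the `Module ℝ X` and `FiniteDimensional ℝ X` instances of `X` still apply
-- once `X` carries the norm `q^s`.
abbrev normedAddCommGroup (hq : IsAsymmetricNorm q) : NormedAddCommGroup X :=
  AddGroupNorm.toNormedAddCommGroup
    { toFun := qs q
      map_zero' := by simp [qs, hq.map_zero]
      add_le' := fun x y => by
        refine max_le ((hq.add_le x y).trans (add_le_add (le_max_left _ _) (le_max_left _ _))) ?_
        rw [neg_add]
        exact (hq.add_le _ _).trans (add_le_add (le_max_right _ _) (le_max_right _ _))
      neg' := fun x => by simp [qs, max_comm]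
      eq_zero_of_map_eq_zero' := fun x hx => (hq.eq_zero_iff x).1
        ⟨le_antisymm (hx ▸ le_max_left _ _) (hq.nonneg x),
          le_antisymm (hx ▸ le_max_right _ _) (hq.nonneg _)⟩ }

abbrev normedSpace (hq : IsAsymmetricNorm q) :
    @NormedSpace ℝ X _ hq.normedAddCommGroup.toSeminormedAddCommGroup := by
  letI := hq.normedAddCommGroup
  refine @NormedSpace.mk ℝ X _ _ (inferInstance : Module ℝ X) fun r x => le_of_eq ?_
  change qs q (r • x) = ‖r‖ * qs q x
  rcases le_or_gt 0 r with hr | hr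
  · rw [qs, qs, ← smul_neg, hq.smul r x hr, hq.smul r _ hr, Real.norm_of_nonneg hr,
      mul_max_of_nonneg _ _ hr]
  · have hr' : 0 ≤ -r := neg_nonneg.2 hr.le
    have h₁ : q (r • x) = -r * q (-x) := by rw [← hq.smul _ _ hr', neg_smul, smul_neg, neg_neg]
    have h₂ : q (-(r • x)) = -r * q x := by rw [← hq.smul _ _ hr', neg_smul]
    rw [qs, qs, h₁, h₂, Real.norm_of_nonpos hr.le, mul_max_of_nonneg _ _ hr', max_comm]

theorem eq_zero_of_forall_add_smul_mem (hq : IsAsymmetricNorm q) {C : Set X} {y v : X}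
    (hC : BddAbove ((fun z => q (z - y)) '' C)) (hv : ∀ t ≥ (0 : ℝ), y + t • v ∈ C) :
    q v = 0 := by
  obtain ⟨N, hN⟩ := hC
  refine le_antisymm (not_lt.1 fun hpos => ?_) (hq.nonneg v)
  have ht : 0 ≤ (|N| + 1) / q v := by positivity
  have hle : q (((|N| + 1) / q v) • v) ≤ N := by
    simpa using hN ⟨_, hv _ ht, rfl⟩
  rw [hq.smul _ _ ht, div_mul_cancel₀ _ hpos.ne'] at hle
  linarith [le_abs_self N]

end IsAsymmetricNorm

theorem stmt18_general {X : Type*} [AddCommGroup X] [Module ℝ X] [FiniteDimensional ℝ X] (q : X → ℝ)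
    (hq0 : ∀ x, 0 ≤ q x)
    (hqh : ∀ (t : ℝ) (x : X), 0 ≤ t → q (t • x) = t * q x)
    (hqtri : ∀ x y, q (x + y) ≤ q x + q y)
    (hqsep : ∀ x, (q x = 0 ∧ q (-x) = 0) ↔ x = 0)
    (K : Set X) (hK : @IsCompact X (tauQ q) K) (hconv : Convex ℝ K)
    (K' : Set X)
    (h1 : convexHull ℝ {x | IsExtremePt (K + theta0 q) x} ⊆ K')
    (h2 : K' ⊆ convexHull ℝ {x | IsExtremePt (K + theta0 q) x} + theta0 q) :
    @IsCompact X (tauQ q) K' := by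
  have hq : IsAsymmetricNorm q := ⟨hq0, hqh, hqtri, hqsep⟩
  let := hq.normedAddCommGroup
  let := hq.normedSpace
  rw [setOf_isExtremePt_eq] at h1 h2
  have hSK : convexHull ℝ ((K + theta0 q).extremePoints ℝ) ⊆ K :=
    convexHull_min (by simpa using extremePoints_add_pointedCone_subset K hq.theta0Cone) hconv
  have hrec : ∀ y ∈ K + theta0 q, ∀ v, (∀ t ≥ (0 : ℝ), y + t • v ∈ K + theta0 q) →
      v ∈ hq.theta0Cone := fun y _ v hv =>
    hq.eq_zero_of_forall_add_smul_mem (hK.bddAbove_image_sub_add_theta0 hqtri y) hv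
  have hC : IsClosed (K + theta0 q) := hK.isClosed_add_theta0 hq0 hqtri fun x => le_max_left _ _
  have hKS : K ⊆ convexHull ℝ ((K + theta0 q).extremePoints ℝ) + theta0 q :=
    (subset_add_left K hq.map_zero).trans (by
      simpa using hC.subset_convexHull_extremePoints_add (hconv.add hq.theta0Cone.convex)
        hq.salient_theta0Cone hrec)
  exact hK.of_subset_add_theta0 hqtri (h2.trans (add_subset_add_right hSK))
    (hKS.trans (add_subset_add_right h1))

theorem stmt18 {X : Type*} [AddCommGroup X] [Module ℝ X] [FiniteDimensional ℝ X] (q : X → ℝ)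
    (hq0 : ∀ x, 0 ≤ q x)
    (hqh : ∀ (t : ℝ) (x : X), 0 ≤ t → q (t • x) = t * q x)
    (hqtri : ∀ x y, q (x + y) ≤ q x + q y)
    (hqsep : ∀ x, (q x = 0 ∧ q (-x) = 0) ↔ x = 0)
    (K : Set X) (hne : K.Nonempty) (hK : @IsCompact X (tauQ q) K) (hconv : Convex ℝ K)
    (K' : Set X)
    (h1 : convexHull ℝ {x | IsExtremePt (K + theta0 q) x} ⊆ K')
    (h2 : K' ⊆ convexHull ℝ {x | IsExtremePt (K + theta0 q) x} + theta0 q) :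
    @IsCompact X (tauQ q) K' :=
  stmt18_general q hq0 hqh hqtri hqsep K hK hconv K' h1 h2
end

section
/- For every x ∈ X, the set θ(x) = x + θ(0) = {x + w : w ∈ X, q(w) = 0} is a convex, q-compact set whose set of extreme points is exactly {x}. -/
/-!
The set θ(0) is a pointed convex cone: it is closed under addition and nonnegative scaling,
and it contains no line because `q w = 0 = q (-w)` forces `w = 0`. Hence `0` is its only
extreme point (any `w ≠ 0` is the midpoint of `0` and `2 • w`), and translating by `x` gives
the extreme points of θ(x). Compactness holds for a non-Hausdorff reason: by the triangle
inequality every ball containing `x` contains all of θ(x), so any open cover of θ(x) has a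
one-element subcover.
-/

open Set Pointwise

open Filter Topology

theorem isCompact_of_principal_le_nhds {X : Type*} [TopologicalSpace X] {s : Set X} {x : X}
    (hx : x ∈ s) (h : 𝓟 s ≤ 𝓝 x) : IsCompact s :=
  fun _ _ hf => ⟨x, hx, ClusterPt.of_le_nhds (hf.trans h)⟩

theorem extremePoints_vadd {𝕜 E : Type*} [Ring 𝕜] [PartialOrder 𝕜] [IsOrderedRing 𝕜]
    [AddCommGroup E] [Module 𝕜 E] (a : E) (A : Set E) :
    (a +ᵥ A).extremePoints 𝕜 = a +ᵥ A.extremePoints 𝕜 := by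
  ext y
  obtain ⟨x, rfl⟩ : ∃ x, y = a +ᵥ x := ⟨-a +ᵥ y, by simp⟩
  simp only [mem_extremePoints, ← image_vadd, forall_mem_image, ← vadd_openSegment]
  simp only [image_vadd, vadd_mem_vadd_set_iff, vadd_left_cancel_iff, mem_extremePoints]

theorem isExtremePt_iff_mem_extremePoints {X : Type*} [AddCommGroup X] [Module ℝ X]
    {A : Set X} {x : X} : IsExtremePt A x ↔ x ∈ A.extremePoints ℝ := by
  rw [mem_extremePoints, IsExtremePt]
  refine and_congr_right fun _ => forall₄_congr fun y _ z _ => ⟨?_, ?_⟩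
  · rintro h ⟨a, b, ha, hb, hab, rfl⟩
    obtain rfl : b = 1 - a := by linarith
    exact (h a ha (by linarith) rfl).imp Eq.symm Eq.symm
  · rintro h l hl0 hl1 rfl
    exact (h ⟨l, 1 - l, hl0, by linarith, by ring, rfl⟩).imp Eq.symm Eq.symm

section AsymmetricNorm

variable {X : Type*} [AddCommGroup X] {q : X → ℝ}

theorem zero_mem_theta0 [Module ℝ X]
    (hqh : ∀ (t : ℝ) (x : X), 0 ≤ t → q (t • x) = t * q x) :
    (0 : X) ∈ theta0 q := by
  simpa [theta0] using hqh 0 0 le_rfl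

theorem smul_mem_theta0 [Module ℝ X]
    (hqh : ∀ (t : ℝ) (x : X), 0 ≤ t → q (t • x) = t * q x)
    {t : ℝ} (ht : 0 ≤ t) {w : X} (hw : w ∈ theta0 q) : t • w ∈ theta0 q := by
  simp only [theta0, mem_ofPred_eq] at hw ⊢
  rw [hqh t w ht, hw, mul_zero]

theorem add_mem_theta0 (hq0 : ∀ x, 0 ≤ q x) (hqtri : ∀ x y, q (x + y) ≤ q x + q y)
    {u v : X} (hu : u ∈ theta0 q) (hv : v ∈ theta0 q) : u + v ∈ theta0 q := by
  simp only [theta0, mem_ofPred_eq] at hu hv ⊢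
  linarith [hqtri u v, hq0 (u + v)]

theorem convex_theta0 [Module ℝ X] (hq0 : ∀ x, 0 ≤ q x)
    (hqh : ∀ (t : ℝ) (x : X), 0 ≤ t → q (t • x) = t * q x)
    (hqtri : ∀ x y, q (x + y) ≤ q x + q y) : Convex ℝ (theta0 q) :=
  fun _ hu _ hv _ _ ha hb _ =>
    add_mem_theta0 hq0 hqtri (smul_mem_theta0 hqh ha hu) (smul_mem_theta0 hqh hb hv)

theorem eq_zero_of_smul_add_smul_eq_zero [Module ℝ X]
    (hqh : ∀ (t : ℝ) (x : X), 0 ≤ t → q (t • x) = t * q x)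
    (hqsep : ∀ x, (q x = 0 ∧ q (-x) = 0) ↔ x = 0)
    {a b : ℝ} (ha : 0 < a) (hb : 0 ≤ b) {u v : X} (hu : u ∈ theta0 q) (hv : v ∈ theta0 q)
    (h : a • u + b • v = 0) : u = 0 := by
  have hneg : a • -u = b • v := by rw [smul_neg]; exact neg_eq_of_add_eq_zero_right h
  have hqneg : a * q (-u) = 0 := by
    rw [← hqh a _ ha.le, hneg]
    exact smul_mem_theta0 hqh hb hv
  exact (hqsep u).mp ⟨hu, (mul_eq_zero.mp hqneg).resolve_left ha.ne'⟩

theorem extremePoints_theta0 [Module ℝ X]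
    (hqh : ∀ (t : ℝ) (x : X), 0 ≤ t → q (t • x) = t * q x)
    (hqsep : ∀ x, (q x = 0 ∧ q (-x) = 0) ↔ x = 0) :
    (theta0 q).extremePoints ℝ = {0} := by
  ext w
  constructor
  · rintro ⟨hw, hext⟩
    have hmid : w ∈ openSegment ℝ 0 ((2 : ℝ) • w) :=
      ⟨1 / 2, 1 / 2, by norm_num, by norm_num, by norm_num, by module⟩
    exact (hext (zero_mem_theta0 hqh) (smul_mem_theta0 hqh zero_le_two hw) hmid).symm
  · rintro rfl
    exact ⟨zero_mem_theta0 hqh, fun u hu v hv ⟨a, b, ha, hb, _, h⟩ =>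
      eq_zero_of_smul_add_smul_eq_zero hqh hqsep ha hb.le hu hv h⟩

theorem singleton_add_theta0_subset_asymBall (hqtri : ∀ x y, q (x + y) ≤ q x + q y)
    {x z : X} {ε : ℝ} (hx : x ∈ asymBall q z ε) : {x} + theta0 q ⊆ asymBall q z ε := by
  rw [singleton_add]
  rintro _ ⟨w, hw, rfl⟩
  simp only [asymBall, theta0, mem_ofPred_eq] at hx hw ⊢
  calc q (x + w - z) = q (w + (x - z)) := by congr 1; abel
    _ ≤ q w + q (x - z) := hqtri _ _
    _ < ε := by linarith

theorem principal_le_nhds_tauQ (hqtri : ∀ x y, q (x + y) ≤ q x + q y) (x : X) :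
    𝓟 ({x} + theta0 q) ≤ @nhds X (tauQ q) x := by
  rw [tauQ, TopologicalSpace.nhds_generateFrom]
  refine le_iInf₂ fun s ⟨hxs, z, ε, _, hs⟩ => ?_
  subst hs
  exact principal_mono.2 (singleton_add_theta0_subset_asymBall hqtri hxs)

end AsymmetricNorm

theorem stmt19 {X : Type*} [AddCommGroup X] [Module ℝ X] (q : X → ℝ)
    (hq0 : ∀ x, 0 ≤ q x)
    (hqh : ∀ (t : ℝ) (x : X), 0 ≤ t → q (t • x) = t * q x)
    (hqtri : ∀ x y, q (x + y) ≤ q x + q y)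
    (hqsep : ∀ x, (q x = 0 ∧ q (-x) = 0) ↔ x = 0)
    (x : X) :
    Convex ℝ ({x} + theta0 q) ∧ @IsCompact X (tauQ q) ({x} + theta0 q) ∧
    {p | IsExtremePt ({x} + theta0 q) p} = {x} := by
  let := tauQ q
  have htranslate : {x} + theta0 q = x +ᵥ theta0 q := singleton_add
  have hx : x ∈ {x} + theta0 q := ⟨x, rfl, 0, zero_mem_theta0 hqh, add_zero x⟩
  refine ⟨(convex_singleton x).add (convex_theta0 hq0 hqh hqtri),
    isCompact_of_principal_le_nhds hx (principal_le_nhds_tauQ hqtri x), ?_⟩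
  ext p
  rw [mem_ofPred_eq, isExtremePt_iff_mem_extremePoints, htranslate, extremePoints_vadd,
    extremePoints_theta0 hqh hqsep, vadd_set_singleton, vadd_eq_add, add_zero]
end
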